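/- Fix n > 0, γ ∈ ℝ, β = (β¹,β²) ∈ ℝ². Let g⁻¹ be the 3×3 matrix with entries (g⁻¹)^{tt} = −1/n², (g⁻¹)^{ti} = (g⁻¹)^{it} = β^i/n², (g⁻¹)^{ij} = e^{−2γ} δ^{ij} − β^i β^j/n² (i,j ∈ {1,2}). Let Γ(γ), Γ(n), Γ(β¹), Γ(β²) be the 3×3 matrices Γ(γ) = [[−e^{2γ}/n², e^{2γ}β¹/n², e^{2γ}β²/n²], [e^{2γ}β¹/n², −1 − e^{2γ}(β¹)²/n², −e^{2γ}β¹β²/n²], [e^{2γ}β²/n², −e^{2γ}β¹β²/n², −1 − e^{2γ}(β²)²/n²]]; Γ(n) = (2e^{2γ}/n)·[[1, −β¹, −β²], [−β¹, (β¹)², β¹β²], [−β², β¹β², (β²)²]]; Γ(β¹) = [[0, −2, 0], [−2, 4β¹, 2β²], [0, 2β², 0]]; Γ(β²) = [[0, 0, −2], [0, 0, 2β¹], [−2, 2β¹, 4β²]]. For a vector p = (p₀,p₁,p₂) ∈ ℝ³ write E_p = p₀ − β¹p₁ − β²p₂ and p⃗ = (p₁,p₂). Suppose p satisfies the eikonal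 (null) condition |p⃗|² = (e^{2γ}/n²) E_p². Then for every q = (q₀,q₁,q₂) ∈ ℝ³: (2/n³) E_p² (qᵀ Γ(n) p) − 2 e^{−2γ} |p⃗|² (qᵀ Γ(γ) p) + (2/n²) E_p ( p₁ (qᵀ Γ(β¹) p) + p₂ (qᵀ Γ(β²) p) ) = −2 |p⃗|² (qᵀ g⁻¹ p). In particular, for q = p the left-hand side vanishes. -/

import Mathlib

noncomputable section

/-- The bilinear pairing `qᵀ M p = ∑_{μ,ν} M^{μν} q_μ p_ν`. -/
def bil (M : Matrix (Fin 3) (Fin 3) ℝ) (q p : Fin 3 → ℝ) : ℝ :=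
  ∑ μ, ∑ ν, M μ ν * q μ * p ν

/-- Inverse-metric components `g⁻¹` of the elliptic-gauge metric. -/
def ginvM (n γ b1 b2 : ℝ) : Matrix (Fin 3) (Fin 3) ℝ :=
  !![-(1/n^2), b1/n^2, b2/n^2;
     b1/n^2, Real.exp (-(2*γ)) - b1^2/n^2, -(b1*b2)/n^2;
     b2/n^2, -(b1*b2)/n^2, Real.exp (-(2*γ)) - b2^2/n^2]

/-- Coefficient matrix `Γ(γ)`. -/
def GammaG (n γ b1 b2 : ℝ) : Matrix (Fin 3) (Fin 3) ℝ :=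
  !![-(Real.exp (2*γ))/n^2, Real.exp (2*γ)*b1/n^2, Real.exp (2*γ)*b2/n^2;
     Real.exp (2*γ)*b1/n^2, -1 - Real.exp (2*γ)*b1^2/n^2, -(Real.exp (2*γ)*b1*b2)/n^2;
     Real.exp (2*γ)*b2/n^2, -(Real.exp (2*γ)*b1*b2)/n^2, -1 - Real.exp (2*γ)*b2^2/n^2]

/-- Coefficient matrix `Γ(n)`. -/
def GammaN (n γ b1 b2 : ℝ) : Matrix (Fin 3) (Fin 3) ℝ :=
  (2 * Real.exp (2*γ) / n) •
    !![1, -b1, -b2; -b1, b1^2, b1*b2; -b2, b1*b2, b2^2]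

/-- Coefficient matrix `Γ(β¹)`. -/
def GammaB1 (b1 b2 : ℝ) : Matrix (Fin 3) (Fin 3) ℝ :=
  !![0, -2, 0; -2, 4*b1, 2*b2; 0, 2*b2, 0]

/-- Coefficient matrix `Γ(β²)`. -/
def GammaB2 (b1 b2 : ℝ) : Matrix (Fin 3) (Fin 3) ℝ :=
  !![0, 0, -2; 0, 0, 2*b1; -2, 2*b1, 4*b2]

section aux

variable (n γ b1 b2 : ℝ) (q p : Fin 3 → ℝ)

lemma bil_GammaN_eq :
    bil (GammaN n γ b1 b2) q p
      = 2 * Real.exp (2*γ) / n *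
        ((q 0 - b1 * q 1 - b2 * q 2) * (p 0 - b1 * p 1 - b2 * p 2)) := by
  simp [bil, GammaN, Fin.sum_univ_three, Matrix.smul_apply, smul_eq_mul]
  ring

lemma bil_GammaG_eq :
    bil (GammaG n γ b1 b2) q p
      = -(Real.exp (2*γ) / n^2) *
          ((q 0 - b1 * q 1 - b2 * q 2) * (p 0 - b1 * p 1 - b2 * p 2))
        - (q 1 * p 1 + q 2 * p 2) := by
  simp [bil, GammaG, Fin.sum_univ_three, Matrix.smul_apply, smul_eq_mul]
  ring

lemma bil_ginvM_eq :
    bil (ginvM n γ b1 b2) q p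
      = -(1 / n^2) *
          ((q 0 - b1 * q 1 - b2 * q 2) * (p 0 - b1 * p 1 - b2 * p 2))
        + Real.exp (-(2*γ)) * (q 1 * p 1 + q 2 * p 2) := by
  simp [bil, ginvM, Fin.sum_univ_three, Matrix.smul_apply, smul_eq_mul]
  ring

lemma bil_GammaB1_eq :
    bil (GammaB1 b1 b2) q p
      = -2 * ((q 0 - b1 * q 1 - b2 * q 2) * p 1
          + q 1 * (p 0 - b1 * p 1 - b2 * p 2)) := by
  simp [bil, GammaB1, Fin.sum_univ_three, Matrix.smul_apply, smul_eq_mul]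
  ring

lemma bil_GammaB2_eq :
    bil (GammaB2 b1 b2) q p
      = -2 * ((q 0 - b1 * q 1 - b2 * q 2) * p 2
          + q 2 * (p 0 - b1 * p 1 - b2 * p 2)) := by
  simp [bil, GammaB2, Fin.sum_univ_three, Matrix.smul_apply, smul_eq_mul]
  ring

end aux

/-- The algebraic cancellation underlying `R_A(𝒢_{2,A}) = 0`: for a `g`-null covector `p`,
the combination of the `Γ` pairings equals `−2|p⃗|² (qᵀ g⁻¹ p)`; in particular it vanishes
when `q = p`. -/
theorem stmt13 (n γ b1 b2 : ℝ) (hn : 0 < n) (p : Fin 3 → ℝ)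
    (hnull : (p 1)^2 + (p 2)^2
      = Real.exp (2*γ) / n^2 * (p 0 - b1 * p 1 - b2 * p 2)^2) :
    (∀ q : Fin 3 → ℝ,
      (2/n^3) * (p 0 - b1 * p 1 - b2 * p 2)^2 * bil (GammaN n γ b1 b2) q p
        - 2 * Real.exp (-(2*γ)) * ((p 1)^2 + (p 2)^2) * bil (GammaG n γ b1 b2) q p
        + (2/n^2) * (p 0 - b1 * p 1 - b2 * p 2) *
            (p 1 * bil (GammaB1 b1 b2) q p + p 2 * bil (GammaB2 b1 b2) q p)
      = -2 * ((p 1)^2 + (p 2)^2) * bil (ginvM n γ b1 b2) q p) ∧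
    (2/n^3) * (p 0 - b1 * p 1 - b2 * p 2)^2 * bil (GammaN n γ b1 b2) p p
      - 2 * Real.exp (-(2*γ)) * ((p 1)^2 + (p 2)^2) * bil (GammaG n γ b1 b2) p p
      + (2/n^2) * (p 0 - b1 * p 1 - b2 * p 2) *
          (p 1 * bil (GammaB1 b1 b2) p p + p 2 * bil (GammaB2 b1 b2) p p) = 0 := by
  have hn' : n ≠ 0 := ne_of_gt hn
  have hx : Real.exp (2*γ) ≠ 0 := Real.exp_ne_zero _
  have hH : n^2 * ((p 1)^2 + (p 2)^2)
      = Real.exp (2*γ) * (p 0 - b1 * p 1 - b2 * p 2)^2 := by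
    field_simp at hnull
    linarith
  have main : ∀ q : Fin 3 → ℝ,
      (2/n^3) * (p 0 - b1 * p 1 - b2 * p 2)^2 * bil (GammaN n γ b1 b2) q p
        - 2 * Real.exp (-(2*γ)) * ((p 1)^2 + (p 2)^2) * bil (GammaG n γ b1 b2) q p
        + (2/n^2) * (p 0 - b1 * p 1 - b2 * p 2) *
            (p 1 * bil (GammaB1 b1 b2) q p + p 2 * bil (GammaB2 b1 b2) q p)
      = -2 * ((p 1)^2 + (p 2)^2) * bil (ginvM n γ b1 b2) q p := by
    intro q
    rw [bil_GammaN_eq, bil_GammaG_eq, bil_GammaB1_eq, bil_GammaB2_eq, bil_ginvM_eq,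
      Real.exp_neg]
    field_simp
    linear_combination (2*n^2*(p 1*q 1 + p 2*q 2) - 2*Real.exp (2*γ)*((q 0 - b1*q 1 - b2*q 2)*(p 0 - b1*p 1 - b2*p 2))) * hH
  refine ⟨main, ?_⟩
  rw [main p, bil_ginvM_eq, Real.exp_neg]
  field_simp
  linear_combination (-2*((p 1)^2 + (p 2)^2)) * hH

end
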